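/- arXiv:2509.10094 — 3 statements merged into one kernel-verified Lean document; each statement's English description precedes it below -/
import Mathlib

section
/- Let γ, κ, σ > 0, let A_0, A_1, c_0, c_1 > 0, and let z_0, z_1 ∈ ℝ. Define h(d) = Σ_{j=0,1} A_j e^{-(κ/σ)(d + c_j)} · (1 − e^{−γ(z_j + d)})/γ for d ∈ ℝ. Then h has a unique critical point d* = (1/γ)[ log(1 + σγ/κ) + log( (Σ_j A_j e^{−(κ/σ)c_j − γ z_j}) / (Σ_j A_j e^{−(κ/σ)c_j}) ) ], and d* is the unique global maximizer of h over ℝ. -/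
open Real Set

theorem stmt0 (γ κ σ A0 A1 c0 c1 z0 z1 : ℝ)
    (hγ : 0 < γ) (hκ : 0 < κ) (hσ : 0 < σ)
    (hA0 : 0 < A0) (hA1 : 0 < A1) (hc0 : 0 < c0) (hc1 : 0 < c1) :
    let h : ℝ → ℝ := fun d =>
      A0 * Real.exp (-(κ/σ) * (d + c0)) * ((1 - Real.exp (-γ * (z0 + d))) / γ)
      + A1 * Real.exp (-(κ/σ) * (d + c1)) * ((1 - Real.exp (-γ * (z1 + d))) / γ)
    let dstar : ℝ := (1/γ) * (Real.log (1 + σ * γ / κ)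
      + Real.log ((A0 * Real.exp (-(κ/σ) * c0 - γ * z0) + A1 * Real.exp (-(κ/σ) * c1 - γ * z1))
          / (A0 * Real.exp (-(κ/σ) * c0) + A1 * Real.exp (-(κ/σ) * c1))))
    (∀ d : ℝ, deriv h d = 0 ↔ d = dstar) ∧
    (∀ d : ℝ, d ≠ dstar → h d < h dstar) := by
  intro h dstar
  set k : ℝ := κ / σ with hk
  have hkpos : 0 < k := div_pos hκ hσ
  set B : ℝ := A0 * Real.exp (-(κ/σ) * c0) + A1 * Real.exp (-(κ/σ) * c1) with hB
  set C : ℝ := A0 * Real.exp (-(κ/σ) * c0 - γ * z0) + A1 * Real.exp (-(κ/σ) * c1 - γ * z1) with hC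
  have hBpos : 0 < B := by positivity
  have hCpos : 0 < C := by positivity
  -- rewrite h
  have hh : h = fun d => (1/γ) * (B * Real.exp (-k*d) - C * Real.exp (-(k+γ)*d)) := by
    funext d
    simp only [h, hB, hC, hk]
    rw [show -(κ/σ) * (d + c0) = -(κ/σ)*d + -(κ/σ)*c0 by ring,
        show -(κ/σ) * (d + c1) = -(κ/σ)*d + -(κ/σ)*c1 by ring,
        show -γ * (z0 + d) = -γ*z0 + -γ*d by ring,
        show -γ * (z1 + d) = -γ*z1 + -γ*d by ring,
        show -(κ/σ) * c0 - γ * z0 = -(κ/σ)*c0 + -γ*z0 by ring,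
        show -(κ/σ) * c1 - γ * z1 = -(κ/σ)*c1 + -γ*z1 by ring,
        show -(κ/σ+γ)*d = -(κ/σ)*d + -γ*d by ring]
    simp only [Real.exp_add]
    field_simp
    ring
  -- derivative
  have Hd : ∀ d : ℝ, HasDerivAt h
      ((1/γ) * Real.exp (-(k+γ)*d) * ((k+γ)*C - k*B*Real.exp (γ*d))) d := by
    intro d
    rw [hh]
    have h1 : HasDerivAt (fun x : ℝ => Real.exp (-k*x)) (Real.exp (-k*d) * (-k)) d := by
      simpa using ((hasDerivAt_id d).const_mul (-k)).exp
    have h2 : HasDerivAt (fun x : ℝ => Real.exp (-(k+γ)*x)) (Real.exp (-(k+γ)*d) * (-(k+γ))) d := by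
      simpa using ((hasDerivAt_id d).const_mul (-(k+γ))).exp
    have := ((h1.const_mul B).sub (h2.const_mul C)).const_mul (1/γ)
    refine this.congr_deriv ?_
    have e : Real.exp (-k*d) = Real.exp (-(k+γ)*d) * Real.exp (γ*d) := by
      rw [← Real.exp_add]; ring_nf
    rw [e]; ring
  have hderiv : ∀ d : ℝ, deriv h d
      = (1/γ) * Real.exp (-(k+γ)*d) * ((k+γ)*C - k*B*Real.exp (γ*d)) :=
    fun d => (Hd d).deriv
  -- dstar as log
  set L : ℝ := ((k+γ)*C) / (k*B) with hL
  have hLpos : 0 < L := by positivity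
  have hds : γ * dstar = Real.log L := by
    have h1 : (1 : ℝ) + σ * γ / κ = (k + γ) / k := by
      rw [hk]
      field_simp
    have h2 : Real.log ((k + γ)/k) + Real.log (C/B) = Real.log L := by
      rw [← Real.log_mul (by positivity) (by positivity)]
      congr 1
      rw [hL]
      field_simp
    simp only [dstar, hB, hC, h1]
    rw [h2]
    field_simp
  have hexpds : Real.exp (γ * dstar) = L := by rw [hds, Real.exp_log hLpos]
  have hcrit : (k+γ)*C - k*B*Real.exp (γ*dstar) = 0 := by
    rw [hexpds, hL]
    field_simp
    ring
  constructor
  · intro d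
    rw [hderiv d]
    constructor
    · intro hd0
      have h0 : (k+γ)*C - k*B*Real.exp (γ*d) = 0 := by
        have hne : (1/γ) * Real.exp (-(k+γ)*d) ≠ 0 := by positivity
        have := mul_eq_zero.mp hd0
        rcases this with h' | h'
        · exact absurd h' hne
        · exact h'
      have : Real.exp (γ*d) = L := by
        have hkB : k*B ≠ 0 := by positivity
        rw [hL, eq_div_iff hkB]
        linarith [h0]
      have hgd : γ * d = γ * dstar := Real.exp_injective (this.trans hexpds.symm)
      exact mul_left_cancel₀ hγ.ne' hgd
    · intro hd
      rw [hd, hcrit, mul_zero]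
  · -- maximizer
    have hdiff : Differentiable ℝ h := fun d => (Hd d).differentiableAt
    have hpos : ∀ d ∈ Iio dstar, 0 < deriv h d := by
      intro d hd
      rw [hderiv d]
      have : Real.exp (γ*d) < L := by
        rw [← hexpds]
        exact Real.exp_lt_exp.mpr (by exact (mul_lt_mul_iff_right₀ hγ).mpr hd)
      have h1 : k*B*Real.exp (γ*d) < (k+γ)*C := by
        rw [hL] at this
        calc k*B*Real.exp (γ*d) < k*B*(((k+γ)*C)/(k*B)) := by
              exact (mul_lt_mul_iff_right₀ (by positivity)).mpr this
          _ = (k+γ)*C := by field_simp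
      have : 0 < (k+γ)*C - k*B*Real.exp (γ*d) := by linarith
      positivity
    have hneg : ∀ d ∈ Ioi dstar, deriv h d < 0 := by
      intro d hd
      rw [hderiv d]
      have : L < Real.exp (γ*d) := by
        rw [← hexpds]
        exact Real.exp_lt_exp.mpr ((mul_lt_mul_iff_right₀ hγ).mpr hd)
      have h1 : (k+γ)*C < k*B*Real.exp (γ*d) := by
        rw [hL] at this
        calc (k+γ)*C = k*B*(((k+γ)*C)/(k*B)) := by field_simp
          _ < k*B*Real.exp (γ*d) := (mul_lt_mul_iff_right₀ (by positivity)).mpr this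
      have h2 : (k+γ)*C - k*B*Real.exp (γ*d) < 0 := by linarith
      have h3 : 0 < (1/γ) * Real.exp (-(k+γ)*d) := by positivity
      exact mul_neg_of_pos_of_neg h3 h2
    have hmono : StrictMonoOn h (Iic dstar) := by
      apply strictMonoOn_of_deriv_pos (convex_Iic dstar) (hdiff.continuous.continuousOn)
      intro d hd
      rw [interior_Iic] at hd
      exact hpos d hd
    have hanti : StrictAntiOn h (Ici dstar) := by
      apply strictAntiOn_of_deriv_neg (convex_Ici dstar) (hdiff.continuous.continuousOn)
      intro d hd
      rw [interior_Ici] at hd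
      exact hneg d hd
    intro d hd
    rcases lt_or_gt_of_ne hd with hlt | hgt
    · exact hmono (le_of_lt hlt) (le_refl dstar) hlt
    · exact hanti (le_refl dstar) (le_of_lt hgt) hgt
end

section
/- Let γ, κ, σ > 0, β ∈ (0,1), let A_0, A_1, c_0, c_1 > 0, z_0, z_1 ∈ ℝ, and fix d' ∈ ℝ. Define h_β(d) = Σ_{j=0,1} A_j e^{-(κ/σ)(d + c_j)} · (1 − e^{−γ(z_j + (1−β)d + βd')})/γ. Then h_β has a unique critical point d*_β = −(β/(1−β)) d' + (1/(γ(1−β)))[ log(1 + (1−β)σγ/κ) + log( (Σ_j A_j e^{−(κ/σ)c_j − γ z_j}) / (Σ_j A_j e^{−(κ/σ)c_j}) ) ], which is the unique global maximizer of h_β over ℝ. -/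
open Real Set

lemma stmt1_aux (A k γ c z w η : ℝ) (hγ : γ ≠ 0) (d : ℝ) :
    HasDerivAt (fun d => A * Real.exp (-k * (d + c)) * ((1 - Real.exp (-γ * (z + η*d + w))) / γ))
      (A * Real.exp (-k * (d + c)) *
        (-(k/γ) + (k/γ + η) * Real.exp (-γ * (z + η*d + w)))) d := by
  have h1 : HasDerivAt (fun d : ℝ => -k * (d + c)) (-k) d := by
    simpa using ((hasDerivAt_id d).add_const c).const_mul (-k)
  have h2 : HasDerivAt (fun d : ℝ => A * Real.exp (-k * (d + c)))
      (A * (Real.exp (-k * (d + c)) * -k)) d := h1.exp.const_mul A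
  have h3 : HasDerivAt (fun d : ℝ => -γ * (z + η * d + w)) (-γ * η) d := by
    simpa using ((((hasDerivAt_id d).const_mul η).const_add z).add_const w).const_mul (-γ)
  have h4 : HasDerivAt (fun d : ℝ => (1 - Real.exp (-γ * (z + η*d + w))) / γ)
      ((-(Real.exp (-γ * (z + η*d + w)) * (-γ * η))) / γ) d := (h3.exp.const_sub 1).div_const γ
  have h5 := h2.mul h4
  refine h5.congr_deriv ?_
  field_simp
  ring

theorem stmt1 (γ κ σ β A0 A1 c0 c1 z0 z1 d' : ℝ)
    (hγ : 0 < γ) (hκ : 0 < κ) (hσ : 0 < σ) (hβ : β ∈ Set.Ioo (0:ℝ) 1)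
    (hA0 : 0 < A0) (hA1 : 0 < A1) (hc0 : 0 < c0) (hc1 : 0 < c1) :
    let hb : ℝ → ℝ := fun d =>
      A0 * Real.exp (-(κ/σ) * (d + c0)) * ((1 - Real.exp (-γ * (z0 + (1-β)*d + β*d'))) / γ)
      + A1 * Real.exp (-(κ/σ) * (d + c1)) * ((1 - Real.exp (-γ * (z1 + (1-β)*d + β*d'))) / γ)
    let dstar : ℝ := -(β/(1-β)) * d' + (1/(γ*(1-β))) * (Real.log (1 + (1-β) * σ * γ / κ)
      + Real.log ((A0 * Real.exp (-(κ/σ) * c0 - γ * z0) + A1 * Real.exp (-(κ/σ) * c1 - γ * z1))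
          / (A0 * Real.exp (-(κ/σ) * c0) + A1 * Real.exp (-(κ/σ) * c1))))
    (∀ d : ℝ, deriv hb d = 0 ↔ d = dstar) ∧
    (∀ d : ℝ, d ≠ dstar → hb d < hb dstar) := by
  intro hb dstar
  obtain ⟨hβ0, hβ1⟩ := hβ
  have hη : (0:ℝ) < 1 - β := by linarith
  have hγη : 0 < γ * (1 - β) := mul_pos hγ hη
  have hk : 0 < κ / σ := div_pos hκ hσ
  have hγ' : γ ≠ 0 := ne_of_gt hγ
  have ha : 0 < A0 * Real.exp (-(κ/σ) * c0) + A1 * Real.exp (-(κ/σ) * c1) := by positivity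
  have hbb : 0 < A0 * Real.exp (-(κ/σ) * c0 - γ * z0) + A1 * Real.exp (-(κ/σ) * c1 - γ * z1) := by
    positivity
  -- key exponential identity for dstar
  have hT : Real.exp (-(γ * (1-β)) * dstar)
      = (κ/σ) * (A0 * Real.exp (-(κ/σ) * c0) + A1 * Real.exp (-(κ/σ) * c1))
        / ((κ/σ + γ * (1-β)) *
          (A0 * Real.exp (-(κ/σ) * c0 - γ * z0) + A1 * Real.exp (-(κ/σ) * c1 - γ * z1))
          * Real.exp (-(γ * β) * d')) := by
    have hsum : -(γ * (1-β)) * dstar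
        = γ * β * d' - (Real.log (1 + (1-β) * σ * γ / κ)
          + Real.log ((A0 * Real.exp (-(κ/σ) * c0 - γ * z0)
              + A1 * Real.exp (-(κ/σ) * c1 - γ * z1))
            / (A0 * Real.exp (-(κ/σ) * c0) + A1 * Real.exp (-(κ/σ) * c1)))) := by
      show -(γ * (1-β)) * (-(β/(1-β)) * d' + (1/(γ*(1-β))) * _) = _
      field_simp
      ring
    rw [hsum, Real.exp_sub, Real.exp_add,
      Real.exp_log (by positivity), Real.exp_log (div_pos hbb ha)]
    have he : Real.exp (γ * β * d') = (Real.exp (-(γ * β) * d'))⁻¹ := by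
      rw [← Real.exp_neg]; ring_nf
    rw [he]
    have h1 : (1 + (1-β) * σ * γ / κ) ≠ 0 := by positivity
    have h2 : Real.exp (-(γ * β) * d') ≠ 0 := (Real.exp_pos _).ne'
    field_simp
  -- the derivative formula
  set P : ℝ := (κ/σ + γ * (1-β)) / γ *
      ((A0 * Real.exp (-(κ/σ) * c0 - γ * z0) + A1 * Real.exp (-(κ/σ) * c1 - γ * z1))
        * Real.exp (-(γ * β) * d')) with hP
  have hPpos : 0 < P := by
    rw [hP]; positivity
  have hD : ∀ d : ℝ, HasDerivAt hb
      (P * Real.exp (-(κ/σ) * d) *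
        (Real.exp (-(γ * (1-β)) * d) - Real.exp (-(γ * (1-β)) * dstar))) d := by
    intro d
    have h0 := stmt1_aux A0 (κ/σ) γ c0 z0 (β*d') (1-β) hγ' d
    have h1 := stmt1_aux A1 (κ/σ) γ c1 z1 (β*d') (1-β) hγ' d
    have h2 := h0.add h1
    refine h2.congr_deriv ?_
    rw [hT, hP]
    have E0 : Real.exp (-(κ/σ) * (d + c0)) = Real.exp (-(κ/σ) * d) * Real.exp (-(κ/σ) * c0) := by
      rw [← Real.exp_add]; ring_nf
    have E1 : Real.exp (-(κ/σ) * (d + c1)) = Real.exp (-(κ/σ) * d) * Real.exp (-(κ/σ) * c1) := by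
      rw [← Real.exp_add]; ring_nf
    have F0 : Real.exp (-γ * (z0 + (1-β)*d + β*d'))
        = Real.exp (-γ * z0) * Real.exp (-(γ * (1-β)) * d) * Real.exp (-(γ * β) * d') := by
      rw [← Real.exp_add, ← Real.exp_add]; ring_nf
    have F1 : Real.exp (-γ * (z1 + (1-β)*d + β*d'))
        = Real.exp (-γ * z1) * Real.exp (-(γ * (1-β)) * d) * Real.exp (-(γ * β) * d') := by
      rw [← Real.exp_add, ← Real.exp_add]; ring_nf
    have G0 : Real.exp (-(κ/σ) * c0 - γ * z0)
        = Real.exp (-(κ/σ) * c0) * Real.exp (-γ * z0) := by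
      rw [← Real.exp_add]; ring_nf
    have G1 : Real.exp (-(κ/σ) * c1 - γ * z1)
        = Real.exp (-(κ/σ) * c1) * Real.exp (-γ * z1) := by
      rw [← Real.exp_add]; ring_nf
    rw [E0, E1, F0, F1, G0, G1]
    have hkγη : (κ/σ + γ * (1-β)) ≠ 0 := by positivity
    have hbb' : Real.exp (-(κ/σ) * c0) * Real.exp (-γ * z0) * A0
        + Real.exp (-(κ/σ) * c1) * Real.exp (-γ * z1) * A1 ≠ 0 := by positivity
    have h2 : Real.exp (-(γ * β) * d') ≠ 0 := (Real.exp_pos _).ne'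
    field_simp
    ring
  have hderiv : ∀ d : ℝ, deriv hb d
      = P * Real.exp (-(κ/σ) * d) *
        (Real.exp (-(γ * (1-β)) * d) - Real.exp (-(γ * (1-β)) * dstar)) :=
    fun d => (hD d).deriv
  have hne : -(γ * (1-β)) ≠ 0 := by
    simp only [neg_ne_zero]; exact ne_of_gt hγη
  constructor
  · intro d
    rw [hderiv d]
    constructor
    · intro h
      have hPe : P * Real.exp (-(κ/σ) * d) ≠ 0 := by positivity
      have h3 : Real.exp (-(γ * (1-β)) * d) - Real.exp (-(γ * (1-β)) * dstar) = 0 :=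
        by rcases mul_eq_zero.mp h with h' | h'
           · exact absurd h' hPe
           · exact h'
      have h4 : Real.exp (-(γ * (1-β)) * d) = Real.exp (-(γ * (1-β)) * dstar) :=
        sub_eq_zero.mp h3
      have h5 : -(γ * (1-β)) * d = -(γ * (1-β)) * dstar := Real.exp_injective h4
      exact mul_left_cancel₀ hne h5
    · intro h; rw [h]; simp
  · have hcont : Continuous hb := by
      have : Differentiable ℝ hb := fun d => (hD d).differentiableAt
      exact this.continuous
    have hmono : StrictMonoOn hb (Set.Iic dstar) := by
      apply strictMonoOn_of_deriv_pos (convex_Iic _) hcont.continuousOn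
      intro d hd
      rw [interior_Iic] at hd
      rw [hderiv d]
      have hlt : -(γ * (1-β)) * dstar < -(γ * (1-β)) * d := by
        have := hd.out
        nlinarith
      have : Real.exp (-(γ * (1-β)) * dstar) < Real.exp (-(γ * (1-β)) * d) :=
        Real.exp_lt_exp.mpr hlt
      have hpos : 0 < Real.exp (-(γ * (1-β)) * d) - Real.exp (-(γ * (1-β)) * dstar) := by
        linarith
      positivity
    have hanti : StrictAntiOn hb (Set.Ici dstar) := by
      apply strictAntiOn_of_deriv_neg (convex_Ici _) hcont.continuousOn
      intro d hd
      rw [interior_Ici] at hd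
      rw [hderiv d]
      have hlt : -(γ * (1-β)) * d < -(γ * (1-β)) * dstar := by
        have := hd.out
        nlinarith
      have hneg : Real.exp (-(γ * (1-β)) * d) - Real.exp (-(γ * (1-β)) * dstar) < 0 := by
        have := Real.exp_lt_exp.mpr hlt
        linarith
      have hPe : 0 < P * Real.exp (-(κ/σ) * d) := by positivity
      exact mul_neg_of_pos_of_neg hPe hneg
    intro d hd
    rcases lt_or_gt_of_ne hd with h | h
    · exact hmono (Set.mem_Iic.mpr h.le) (Set.mem_Iic.mpr le_rfl) h
    · exact hanti (Set.mem_Ici.mpr le_rfl) (Set.mem_Ici.mpr h.le) h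
end

section
/- Let γ, η > 0, c ∈ ℝ, and y, y'' < 0. Define g(z) = e^{η(z − c)} y'' − y (1 + η (1 − e^{−γz})/γ) for z ∈ ℝ. Then g attains its unique global maximum over ℝ at z* = η c/(η + γ) + (1/(η + γ)) log(y / y''). -/
open Real

theorem stmt6 (γ η c y y'' : ℝ) (hγ : 0 < γ) (hη : 0 < η) (hy : y < 0) (hy'' : y'' < 0) :
    let g : ℝ → ℝ := fun z =>
      Real.exp (η * (z - c)) * y'' - y * (1 + η * (1 - Real.exp (-γ * z)) / γ)
    let zstar : ℝ := η * c / (η + γ) + (1/(η + γ)) * Real.log (y / y'')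
    ∀ z : ℝ, z ≠ zstar → g z < g zstar := by
  intro g zstar z hz
  have hηγ : η + γ ≠ 0 := by positivity
  have hγ0 : γ ≠ 0 := ne_of_gt hγ
  have hy0 : y ≠ 0 := ne_of_lt hy
  have hy''0 : y'' ≠ 0 := ne_of_lt hy''
  have hyy : (0:ℝ) < y / y'' := div_pos_of_neg_of_neg hy hy''
  -- key relation: y * exp(-γ*zstar) = exp(η*(zstar-c)) * y''
  have hrel : y * Real.exp (-γ * zstar) = Real.exp (η * (zstar - c)) * y'' := by
    have harg : η * (zstar - c) = Real.log (y / y'') + (-γ * zstar) := by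
      simp only [zstar]
      field_simp
      ring
    rw [harg, Real.exp_add, Real.exp_log hyy]
    field_simp
  have hgdef : ∀ w : ℝ,
      g w = Real.exp (η * (w - c)) * y'' - y * (1 + η * (1 - Real.exp (-γ * w)) / γ) :=
    fun w => rfl
  clear_value g zstar
  set u : ℝ := z - zstar with hu
  have hu0 : u ≠ 0 := sub_ne_zero.mpr hz
  have hexp1 : Real.exp (η * (z - c)) = Real.exp (η * (zstar - c)) * Real.exp (η * u) := by
    rw [← Real.exp_add, hu]; ring_nf
  have hexp2 : Real.exp (-γ * z) = Real.exp (-γ * zstar) * Real.exp (-γ * u) := by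
    rw [← Real.exp_add, hu]; ring_nf
  set K : ℝ := Real.exp (η * (zstar - c)) * y'' with hK
  have hKneg : K < 0 := mul_neg_of_pos_of_neg (Real.exp_pos _) hy''
  have hE3 : Real.exp (-γ * zstar) = K / y := by
    rw [← hrel]; field_simp
  clear_value u
  have key : g zstar - g z =
      (-K) * ((Real.exp (η * u) - 1) + (η / γ) * (Real.exp (-γ * u) - 1)) := by
    rw [hgdef z, hgdef zstar, hexp1, hexp2, ← hK, hE3]
    field_simp
    ring
  have h1 : η * u < Real.exp (η * u) - 1 := by
    have := Real.add_one_lt_exp (mul_ne_zero (ne_of_gt hη) hu0)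
    linarith
  have h2 : -γ * u < Real.exp (-γ * u) - 1 := by
    have := Real.add_one_lt_exp (mul_ne_zero (neg_ne_zero.mpr hγ0) hu0)
    linarith
  have h3 : (η / γ) * (-γ * u) < (η / γ) * (Real.exp (-γ * u) - 1) :=
    mul_lt_mul_of_pos_left h2 (by positivity)
  have h4 : (η / γ) * (-γ * u) = -(η * u) := by field_simp
  rw [h4] at h3
  have hS : 0 < (Real.exp (η * u) - 1) + (η / γ) * (Real.exp (-γ * u) - 1) := by linarith
  have hpos : 0 < (-K) * ((Real.exp (η * u) - 1) + (η / γ) * (Real.exp (-γ * u) - 1)) :=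
    mul_pos (by linarith) hS
  linarith [key, hpos]
end
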